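/- arXiv:2410.24165 — 2 statements merged into one kernel-verified Lean document; each statement's English description precedes it below -/
import Mathlib

section
/- Let G be a Hausdorff topological group and T₁, …, Tₙ ⊆ G be subsets that are each locally cofinite at 0 and nowhere dense in G. Then Eₙ = T₁ + ⋯ + Tₙ is nowhere dense in G. -/
/-!
Adjoining `0` to a set `T` that is locally cofinite at `0` yields a compact set (a convergent
"sequence" together with its limit). The key step is that `insert 0 T + K` is nowhere dense
whenever `K` is compact and nowhere dense: if its interior were nonempty, pick an open `V` in it
whose closure misses `K`. For every neighbourhood `u` of `0`, only finitely many points of `T` lie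
outside `u`, and a finite set of translates of `K` cannot cover `V`, so some `c ∈ T ∩ u` lies in
`V - K`. Hence `0 ∈ closure (V - K) ⊆ closure V - K`, i.e. `closure V` meets `K`.
Iterating, `(T₁ ∪ {0}) + ⋯ + (Tₙ ∪ {0}) ⊇ Eₙ` is nowhere dense as soon as `{0}` is, that is,
when `G` is not discrete. In a discrete group the only nowhere dense set is `∅`, so `T₁ = ∅`.
-/

open Set Pointwise Filter Topology

def LCF0 {G : Type*} [AddGroup G] [TopologicalSpace G] (T : Set G) : Prop :=
  (0 : G) ∉ T ∧ ∀ u : Set G, IsOpen u → (0 : G) ∈ u → (T \ u).Finite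

lemma LCF0.isCompact_insert_zero {G : Type*} [AddGroup G] [TopologicalSpace G] {T : Set G}
    (hT : LCF0 T) : IsCompact (insert 0 T) := by
  have hlim : Tendsto ((↑) : T → G) cofinite (𝓝 0) := by
    refine tendsto_nhds.2 fun u hu hu0 => mem_cofinite.2 ?_
    convert (hT.2 u hu hu0).preimage Subtype.val_injective.injOn using 1
    ext x
    simp
  simpa using hlim.isCompact_insert_range_of_cofinite

lemma IsNowhereDense.union {X : Type*} [TopologicalSpace X] {s t : Set X}
    (hs : IsNowhereDense s) (ht : IsNowhereDense t) : IsNowhereDense (s ∪ t) := by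
  rw [IsNowhereDense, closure_union,
    interior_union_isClosed_of_interior_empty isClosed_closure ht]
  exact hs

lemma IsNowhereDense.nonempty_diff {X : Type*} [TopologicalSpace X] {s U : Set X}
    (hs : IsNowhereDense s) (hU : IsOpen U) (hne : U.Nonempty) : (U \ s).Nonempty := by
  rw [nonempty_iff_ne_empty, Ne, sdiff_eq_empty]
  intro hUs
  have h := interior_maximal (hUs.trans subset_closure) hU
  rw [hs, subset_empty_iff] at h
  exact hne.ne_empty h

lemma isNowhereDense_iff_eq_empty {X : Type*} [TopologicalSpace X] [DiscreteTopology X]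
    {s : Set X} : IsNowhereDense s ↔ s = ∅ := by
  rw [IsNowhereDense, closure_discrete, (isOpen_discrete s).interior_eq]

lemma isCompact_list_sum {M : Type*} [AddMonoid M] [TopologicalSpace M] [ContinuousAdd M] :
    ∀ L : List (Set M), (∀ s ∈ L, IsCompact s) → IsCompact L.sum
  | [], _ => by simp
  | s :: L, h => by
    rw [List.sum_cons]
    exact (h s List.mem_cons_self).add
      (isCompact_list_sum L fun t ht => h t (List.mem_cons_of_mem _ ht))

section TopologicalAddGroup

variable {G : Type*} [AddGroup G] [TopologicalSpace G] [IsTopologicalAddGroup G]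

lemma IsNowhereDense.finite_add {F K : Set G} (hF : F.Finite) (hK : IsNowhereDense K) :
    IsNowhereDense (F + K) := by
  refine hF.induction_on _ (by simp) fun {a F'} _ _ ih => ?_
  rw [insert_eq, union_add, singleton_add]
  exact ((Homeomorph.addLeft a).isInducing.isNowhereDense_image hK).union ih

lemma LCF0.zero_mem_closure_add_neg {T K V : Set G} (hT : LCF0 T) (hK : IsNowhereDense K)
    (hVo : IsOpen V) (hVne : V.Nonempty) (hV : V ⊆ insert 0 T + K) :
    (0 : G) ∈ closure (V + -K) := by
  refine mem_closure_iff.2 fun u hu hu0 => ?_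
  have hF : IsNowhereDense (insert 0 (T \ u) + K) := IsNowhereDense.finite_add ((hT.2 u hu hu0).insert 0) hK
  obtain ⟨z, hzV, hzF⟩ := hF.nonempty_diff hVo hVne
  obtain ⟨c, hc, k, hk, rfl⟩ := hV hzV
  have hcu : c ∈ u := by
    by_contra hcu
    refine hzF (add_mem_add ?_ hk)
    rcases hc with rfl | hcT
    · exact mem_insert _ _
    · exact mem_insert_of_mem _ ⟨hcT, hcu⟩
  exact ⟨c, hcu, c + k, hzV, -k, neg_mem_neg.2 hk, add_neg_cancel_right c k⟩

variable [T2Space G]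

lemma LCF0.isNowhereDense_insert_zero_add {T K : Set G} (hT : LCF0 T) (hK : IsCompact K)
    (hKnwd : IsNowhereDense K) : IsNowhereDense (insert 0 T + K) := by
  have hCK : IsCompact (insert 0 T + K) := hT.isCompact_insert_zero.add hK
  rw [hCK.isClosed.isNowhereDense_iff, ← not_nonempty_iff_eq_empty]
  intro hW
  obtain ⟨y, hyW, hyK⟩ := hKnwd.nonempty_diff isOpen_interior hW
  obtain ⟨V, hVo, hyV, hVsub⟩ := isCompact_singleton.exists_isOpen_closure_subset
    ((isOpen_interior.sdiff hK.isClosed).mem_nhdsSet.2 (singleton_subset_iff.2 ⟨hyW, hyK⟩))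
  have hV : closure V ⊆ insert 0 T + K := fun x hx => interior_subset (hVsub hx).1
  have hVc : IsCompact (closure V) := hCK.of_isClosed_subset isClosed_closure hV
  have h0 : (0 : G) ∈ closure V + -K :=
    (hVc.add hK.neg).isClosed.closure_subset_iff.2 (add_subset_add_right subset_closure)
      (hT.zero_mem_closure_add_neg hKnwd hVo ⟨y, hyV rfl⟩ (subset_closure.trans hV))
  obtain ⟨v, hv, k, hk, hvk⟩ := h0
  rw [eq_neg_of_add_eq_zero_left hvk] at hv
  exact (hVsub hv).2 hk

lemma isNowhereDense_list_sum_insert_zero [(𝓝[≠] (0 : G)).NeBot] :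
    ∀ L : List (Set G), (∀ T ∈ L, LCF0 T) → IsNowhereDense (L.map (insert 0)).sum
  | [], _ => by
    rw [List.map_nil, List.sum_nil, ← singleton_zero, isClosed_singleton.isNowhereDense_iff,
      interior_singleton]
  | T :: L, h => by
    have hL : ∀ S ∈ L, LCF0 S := fun S hS => h S (List.mem_cons_of_mem _ hS)
    have hc : IsCompact (L.map (insert 0)).sum := isCompact_list_sum _ <| by
      simpa using fun S hS => (hL S hS).isCompact_insert_zero
    rw [List.map_cons, List.sum_cons]
    exact (h T List.mem_cons_self).isNowhereDense_insert_zero_add hc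
      (isNowhereDense_list_sum_insert_zero L hL)

end TopologicalAddGroup

theorem stmt_7 {G : Type*} [AddGroup G] [TopologicalSpace G] [IsTopologicalAddGroup G]
    [T2Space G] (n : ℕ) (hn : 1 ≤ n) (T : Fin n → Set G)
    (hT : ∀ i, LCF0 (T i)) (hTnwd : ∀ i, IsNowhereDense (T i)) :
    IsNowhereDense {g : G | ∃ t : Fin n → G,
      (∀ i, t i ∈ T i) ∧ (List.ofFn t).sum = g} := by
  rcases (𝓝[≠] (0 : G)).eq_or_neBot with h0 | h0
  · have : DiscreteTopology G :=
      discreteTopology_of_isOpen_singleton_zero ((isOpen_singleton_iff_punctured_nhds 0).2 h0)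
    have hT0 : T ⟨0, hn⟩ = ∅ := isNowhereDense_iff_eq_empty.1 (hTnwd _)
    refine isNowhereDense_empty.mono ?_
    rintro g ⟨t, ht, -⟩
    simpa [hT0] using ht ⟨0, hn⟩
  · refine (isNowhereDense_list_sum_insert_zero (List.ofFn T) (by simpa using hT)).mono ?_
    rintro g ⟨t, ht, rfl⟩
    rw [List.map_ofFn]
    exact mem_sum_list_ofFn.2 ⟨fun i => ⟨t i, mem_insert_of_mem _ (ht i)⟩, rfl⟩
end

section
/- Every infinite set of n-term Egyptian fractions contains a strictly decreasing sequence: if S ⊆ ℝ is infinite and every element of S is of the form 1/m₁ + ⋯ + 1/mₙ with positive integers mᵢ, then there exists a sequence (sₖ) in S with sₖ₊₁ < sₖ for all k. -/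
/-!
By Dickson's lemma the tuples `m ∈ ℕⁿ` are well-quasi-ordered coordinatewise, and `m ↦ ∑ 1/mᵢ`
reverses that order, so every sequence of `n`-term Egyptian fractions has indices `j < k` with
`sⱼ ≥ sₖ`. An infinite linear order contains a strictly monotone or a strictly antitone sequence
(infinitary Erdős–Szekeres); the first alternative is therefore excluded.
-/

open Set

def egyptianFractions (n : ℕ) : Set ℝ :=
  (fun m : Fin n → ℕ => ∑ i, (1 : ℝ) / m i) '' {m | ∀ i, 1 ≤ m i}

theorem partiallyWellOrderedOn_egyptianFractions (n : ℕ) :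
    (egyptianFractions n).PartiallyWellOrderedOn (· ≥ ·) := by
  refine (isPWO_of_wellQuasiOrderedLE {m : Fin n → ℕ | ∀ i, 1 ≤ m i}).image_of_monotone_on ?_
  intro m hm m' _ hle
  refine Finset.sum_le_sum fun i _ => one_div_le_one_div_of_le ?_ (by exact_mod_cast hle i)
  exact_mod_cast hm i

theorem Set.Infinite.exists_strictAnti_of_partiallyWellOrderedOn_ge {α : Type*} [LinearOrder α]
    {s : Set α} (hs : s.Infinite) (hpwo : s.PartiallyWellOrderedOn (· ≥ ·)) :
    ∃ f : ℕ → α, (∀ k, f k ∈ s) ∧ StrictAnti f := by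
  have : Infinite s := hs.to_subtype
  obtain ⟨f, hmono | hanti⟩ := Infinite.exists_strictMono_or_strictAnti s
  · obtain ⟨j, k, hjk, hge⟩ := hpwo.exists_lt (f := fun k => (f k : α)) fun k => (f k).2
    exact absurd (hmono hjk) (not_lt.2 hge)
  · exact ⟨fun k => f k, fun k => (f k).2, hanti⟩

theorem stmt_15 (n : ℕ) (S : Set ℝ) (hSinf : S.Infinite)
    (hS : ∀ s ∈ S, ∃ m : Fin n → ℕ, (∀ i, 1 ≤ m i) ∧ s = ∑ i, (1 : ℝ) / (m i)) :
    ∃ f : ℕ → ℝ, (∀ k, f k ∈ S) ∧ ∀ k, f (k + 1) < f k := by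
  have hsub : S ⊆ egyptianFractions n := fun s hs => by
    obtain ⟨m, hm, rfl⟩ := hS s hs
    exact ⟨m, hm, rfl⟩
  obtain ⟨f, hfS, hanti⟩ := hSinf.exists_strictAnti_of_partiallyWellOrderedOn_ge
    ((partiallyWellOrderedOn_egyptianFractions n).mono hsub)
  exact ⟨f, hfS, fun k => hanti k.lt_succ_self⟩
end
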